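/- arXiv:2103.11985 — 2 statements merged into one kernel-verified Lean document; each statement's English description precedes it below -/
import Mathlib

section
/- Let Λ = (ℤ/Nℤ)² with lattice Laplacian Δ and Green's function G as above, and let 0 ∈ Λ be a fixed vertex. The matrix Δ_{0ᶜ0ᶜ} = (Δ_{ij})_{i,j∈Λ∖{0}} is invertible and for all i, j ∈ Λ∖{0}: −4((Δ_{0ᶜ0ᶜ})^{−1})_{ij} = G_{ij} − G_{i0} − G_{0j} + G_{00}. -/
open Matrix Filter

/-- The discrete two-dimensional torus `(ℤ/Nℤ)²`. -/
abbrev Torus (N : ℕ) := ZMod N × ZMod N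

/-- The four nearest-neighbor steps on the torus. -/
def torusSteps (N : ℕ) : List (Torus N) := [(1, 0), (-1, 0), (0, 1), (0, -1)]

/-- One-step transition kernel of simple random walk on the torus:
each of the four steps is taken with probability `1/4`. -/
noncomputable def srwKernel (N : ℕ) : Matrix (Torus N) (Torus N) ℝ :=
  fun i j => ((torusSteps N).count (j - i) : ℝ) / 4

/-- The lattice Laplacian on the torus: `Δ_ij = 1` for neighbors `i ∼ j`
(counted with multiplicity), `Δ_ii = -4`, and `0` otherwise. -/
noncomputable def lap (N : ℕ) : Matrix (Torus N) (Torus N) ℝ :=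
  fun i j => if i = j then -4 else ((torusSteps N).count (j - i) : ℝ)

/-- The Green's function
`G_ij = lim_{λ↓0} ∑_{t≥0} (P_i(X_t = j) − 1/|Λ|) e^{−λt}` of simple random walk. -/
noncomputable def green (N : ℕ) [NeZero N] (i j : Torus N) : ℝ :=
  limUnder (nhdsWithin (0 : ℝ) (Set.Ioi 0))
    (fun lam : ℝ =>
      ∑' t : ℕ, ((srwKernel N ^ t) i j - 1 / (N ^ 2 : ℝ)) * Real.exp (-lam * t))


/-!
Write `P` for the transition matrix of the walk and `J` for the matrix with all entries
`1/|Λ|`. Since `P` is doubly stochastic, `PJ = JP = J² = J`, so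
`(1 - x(P - J)) ∑ₜ xᵗ (Pᵗ - J) = 1 - J`.
A kernel vector of `1 - P + J` is killed by `J` (as `J(1 - P + J) = J`), hence is `P`-harmonic,
hence constant by the maximum principle, hence fixed by `J`, hence zero; so `1 - P + J` is
invertible and letting `x = e^{-λ} → 1` gives `G = (1 - P + J)⁻¹ (1 - J)`. As `Δ = -4(1 - P)`
and `1 - P = (1 - J)(1 - P + J)`, this yields `ΔG = -4(1 - J)`. Finally `Δ` has zero row sums
and every row of `J` is constant, so in `Δ_{0ᶜ0ᶜ} (G_ij - G_i0 - G_0j + G_00)` the `J` terms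
cancel and `ΔG = -4(1 - J)` leaves `-4 · 1`.
-/

section Grounding

variable {ι K : Type*} [Fintype ι] [DecidableEq ι] [Ring K]

def Matrix.groundAt (G : Matrix ι ι K) (o : ι) : Matrix {v // v ≠ o} {v // v ≠ o} K :=
  of fun i j => G i j - G i o - G o j + G o o

theorem Matrix.submatrix_mul_groundAt {L G : Matrix ι ι K} {c : K} {r : ι → K} (o : ι)
    (hL : ∀ i, ∑ k, L i k = 0) (hLG : L * G = c • (1 - of fun i _ => r i)) :
    L.submatrix (↑) (↑) * G.groundAt o = c • (1 : Matrix {v // v ≠ o} {v // v ≠ o} K) := by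
  ext i j
  have hLG_apply (j : ι) : ∑ k, L i k * G k j = c * ((1 : Matrix ι ι K) i j - r i) := by
    simpa [mul_apply] using congrFun₂ hLG i j
  have hsum : ∑ k : {v // v ≠ o}, L i k * G.groundAt o k j
      = ∑ k, L i k * (G k j - G k o - G o j + G o o) := by
    rw [Fintype.sum_eq_add_sum_subtype_ne _ o]
    simp [groundAt]
  have hsplit : ∑ k, L i k * (G k j - G k o - G o j + G o o)
      = ∑ k, L i k * G k j - ∑ k, L i k * G k o := by
    simp only [mul_add, mul_sub, Finset.sum_add_distrib, Finset.sum_sub_distrib,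
      ← Finset.sum_mul, hL, zero_mul, sub_zero, add_zero]
  rw [mul_apply]
  simp only [submatrix_apply]
  rw [hsum, hsplit, hLG_apply, hLG_apply, one_apply_ne i.2, smul_apply, one_apply, one_apply]
  simp only [Subtype.ext_iff, smul_eq_mul, ← mul_sub, zero_sub, sub_neg_eq_add, sub_add_cancel]

end Grounding

section DoublyStochastic

variable {ι : Type*} [Fintype ι] [DecidableEq ι]

noncomputable def uniformMatrix (ι : Type*) [Fintype ι] : Matrix ι ι ℝ :=
  of fun _ _ => (Fintype.card ι : ℝ)⁻¹

theorem apply_eq_of_mulVec_eq_self_of_forall_le {P : Matrix ι ι ℝ} (hP : P ∈ rowStochastic ℝ ι)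
    {v : ι → ℝ} (hv : P *ᵥ v = v) {x y : ι} (hmax : ∀ z, v z ≤ v x) (hxy : 0 < P x y) :
    v y = v x := by
  have hvx : ∑ z, P x z * v z = v x := congrFun hv x
  have hzero : ∑ z, P x z * (v x - v z) = 0 := by
    simp only [mul_sub, Finset.sum_sub_distrib, ← Finset.sum_mul,
      sum_row_of_mem_rowStochastic hP, one_mul, hvx, sub_self]
  have hterm := (Finset.sum_eq_zero_iff_of_nonneg fun z _ =>
    mul_nonneg (nonneg_of_mem_rowStochastic hP) (sub_nonneg.2 (hmax z))).1 hzero y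
    (Finset.mem_univ y)
  linarith [(mul_eq_zero.1 hterm).resolve_left hxy.ne']

theorem uniformMatrix_mem_doublyStochastic [Nonempty ι] :
    uniformMatrix ι ∈ doublyStochastic ℝ ι := by
  refine mem_doublyStochastic_iff_sum.2 ⟨fun _ _ => by simp [uniformMatrix], ?_, ?_⟩ <;>
    simp [uniformMatrix, Fintype.card_ne_zero]

variable {M : Matrix ι ι ℝ}

theorem mul_uniformMatrix_of_mem_doublyStochastic (hM : M ∈ doublyStochastic ℝ ι) :
    M * uniformMatrix ι = uniformMatrix ι := by
  ext i j
  simp [uniformMatrix, mul_apply, ← Finset.sum_mul, sum_row_of_mem_doublyStochastic hM]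

theorem uniformMatrix_mul_of_mem_doublyStochastic (hM : M ∈ doublyStochastic ℝ ι) :
    uniformMatrix ι * M = uniformMatrix ι := by
  ext i j
  simp [uniformMatrix, mul_apply, ← Finset.mul_sum, sum_col_of_mem_doublyStochastic hM]

theorem uniformMatrix_mul_self [Nonempty ι] :
    uniformMatrix ι * uniformMatrix ι = uniformMatrix ι :=
  uniformMatrix_mul_of_mem_doublyStochastic uniformMatrix_mem_doublyStochastic

end DoublyStochastic

section Fundamental

variable {ι : Type*} [Fintype ι] [DecidableEq ι] [Nonempty ι] {P : Matrix ι ι ℝ}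

/-- The Kemeny–Snell fundamental matrix `(1 - P + Π)⁻¹`; for doubly stochastic `P` the
stationary projection `Π` is `uniformMatrix ι`. -/
noncomputable def fundamentalMatrix (P : Matrix ι ι ℝ) : Matrix ι ι ℝ :=
  (1 - P + uniformMatrix ι)⁻¹

theorem uniformMatrix_mul_one_sub_add_uniformMatrix (hP : P ∈ doublyStochastic ℝ ι) :
    uniformMatrix ι * (1 - P + uniformMatrix ι) = uniformMatrix ι := by
  rw [mul_add, mul_sub, mul_one, uniformMatrix_mul_of_mem_doublyStochastic hP,
    uniformMatrix_mul_self, sub_self, zero_add]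

theorem isUnit_det_one_sub_add_uniformMatrix (hP : P ∈ doublyStochastic ℝ ι)
    (hharm : ∀ v, P *ᵥ v = v → ∀ i j, v i = v j) : IsUnit (1 - P + uniformMatrix ι).det := by
  rw [isUnit_iff_ne_zero]
  intro hdet
  obtain ⟨v, hv0, hv⟩ := exists_mulVec_eq_zero_iff.2 hdet
  have hJv : uniformMatrix ι *ᵥ v = 0 := by
    rw [← uniformMatrix_mul_one_sub_add_uniformMatrix hP, ← mulVec_mulVec, hv, mulVec_zero]
  have hPv : P *ᵥ v = v := by
    rw [add_mulVec, sub_mulVec, one_mulVec, hJv, add_zero, sub_eq_zero] at hv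
    exact hv.symm
  refine hv0 (funext fun i => ?_)
  have hconst (j : ι) : v j = v i := hharm v hPv j i
  have hvi : v i = (uniformMatrix ι *ᵥ v) i := by
    simp [uniformMatrix, mulVec, dotProduct, hconst, Fintype.card_ne_zero]
  rw [hvi, hJv]

theorem one_sub_mul_fundamentalMatrix_mul (hP : P ∈ doublyStochastic ℝ ι)
    (hdet : IsUnit (1 - P + uniformMatrix ι).det) :
    (1 - P) * (fundamentalMatrix P * (1 - uniformMatrix ι)) = 1 - uniformMatrix ι := by
  have hfactor : 1 - P = (1 - uniformMatrix ι) * (1 - P + uniformMatrix ι) := by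
    rw [sub_mul, one_mul, uniformMatrix_mul_one_sub_add_uniformMatrix hP, add_sub_cancel_right]
  rw [hfactor, Matrix.mul_assoc, fundamentalMatrix, mul_nonsing_inv_cancel_left _ _ hdet,
    sub_mul, Matrix.one_mul, mul_sub, Matrix.mul_one, uniformMatrix_mul_self, sub_self, sub_zero]

theorem summable_pow_smul_pow_sub_uniformMatrix (hP : P ∈ doublyStochastic ℝ ι) {x : ℝ}
    (hx : |x| < 1) : Summable fun t : ℕ => x ^ t • (P ^ t - uniformMatrix ι) := by
  refine Pi.summable.2 fun i => Pi.summable.2 fun j => ?_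
  refine Summable.of_norm_bounded (summable_geometric_of_lt_one (abs_nonneg x) hx) fun t => ?_
  have hPt := pow_mem hP t
  have hJ : uniformMatrix ι ∈ doublyStochastic ℝ ι := uniformMatrix_mem_doublyStochastic
  rw [Matrix.smul_apply, Matrix.sub_apply, smul_eq_mul, Real.norm_eq_abs, abs_mul, abs_pow]
  exact mul_le_of_le_one_right (by positivity) <| abs_sub_le_of_nonneg_of_le
    (nonneg_of_mem_doublyStochastic hPt) (le_one_of_mem_doublyStochastic hPt)
    (nonneg_of_mem_doublyStochastic hJ) (le_one_of_mem_doublyStochastic hJ)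

theorem one_sub_smul_mul_tsum_pow_smul (hP : P ∈ doublyStochastic ℝ ι) {x : ℝ} (hx : |x| < 1) :
    (1 - x • (P - uniformMatrix ι)) * ∑' t : ℕ, x ^ t • (P ^ t - uniformMatrix ι)
      = 1 - uniformMatrix ι := by
  have hs := summable_pow_smul_pow_sub_uniformMatrix hP hx
  have hstep (t : ℕ) : x • (P - uniformMatrix ι) * (x ^ t • (P ^ t - uniformMatrix ι))
      = x ^ (t + 1) • (P ^ (t + 1) - uniformMatrix ι) := by
    rw [smul_mul_smul_comm, ← pow_succ', sub_mul, mul_sub, mul_sub, ← pow_succ',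
      mul_uniformMatrix_of_mem_doublyStochastic hP,
      uniformMatrix_mul_of_mem_doublyStochastic (pow_mem hP t), uniformMatrix_mul_self, sub_self,
      sub_zero]
  rw [sub_mul, one_mul, ← hs.tsum_mul_left, hs.tsum_eq_zero_add]
  simp only [hstep, pow_zero, one_smul, add_sub_cancel_right]

end Fundamental

section Limit

open Topology

variable {ι : Type*} [Fintype ι] [DecidableEq ι] [Nonempty ι] {P : Matrix ι ι ℝ}

theorem tendsto_tsum_pow_smul_pow_sub_uniformMatrix (hP : P ∈ doublyStochastic ℝ ι)
    (hdet : IsUnit (1 - P + uniformMatrix ι).det) :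
    Tendsto (fun x : ℝ => ∑' t : ℕ, x ^ t • (P ^ t - uniformMatrix ι)) (𝓝[<] 1)
      (𝓝 (fundamentalMatrix P * (1 - uniformMatrix ι))) := by
  set A : ℝ → Matrix ι ι ℝ := fun x => 1 - x • (P - uniformMatrix ι) with hA
  have hAcont : Continuous A := by fun_prop
  have hA1 : A 1 = 1 - P + uniformMatrix ι := by simp only [hA, one_smul]; abel
  have hdet1 : (A 1).det ≠ 0 := by rw [hA1]; exact hdet.ne_zero
  have hinv : ContinuousAt (fun x => (A x)⁻¹) 1 :=
    (continuousAt_matrix_inv _ (by simpa [Ring.inverse_eq_inv'] using continuousAt_inv₀ hdet1)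
      ).comp hAcont.continuousAt
  -- `A x` need only be invertible near `x = 1`, where the series identity then identifies the sum.
  have hunit : ∀ᶠ x in 𝓝 1, IsUnit (A x).det := by
    simpa only [isUnit_iff_ne_zero] using hAcont.matrix_det.continuousAt.eventually_ne hdet1
  have hlim : Tendsto (fun x => (A x)⁻¹ * (1 - uniformMatrix ι)) (𝓝[<] 1)
      (𝓝 (fundamentalMatrix P * (1 - uniformMatrix ι))) := by
    rw [fundamentalMatrix, ← hA1]
    exact (hinv.tendsto.mono_left nhdsWithin_le_nhds).mul_const _
  refine hlim.congr' ?_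
  filter_upwards [nhdsWithin_le_nhds hunit, Ioo_mem_nhdsLT (show (-1 : ℝ) < 1 by norm_num)]
    with x hx hx1
  rw [← one_sub_smul_mul_tsum_pow_smul hP (abs_lt.2 hx1), nonsing_inv_mul_cancel_left _ _ hx]

theorem tendsto_tsum_sub_inv_card_mul_exp (hP : P ∈ doublyStochastic ℝ ι)
    (hdet : IsUnit (1 - P + uniformMatrix ι).det) (i j : ι) :
    Tendsto
      (fun lam : ℝ => ∑' t : ℕ, ((P ^ t) i j - (Fintype.card ι : ℝ)⁻¹) * Real.exp (-lam * t))
      (𝓝[>] 0) (𝓝 ((fundamentalMatrix P * (1 - uniformMatrix ι)) i j)) := by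
  have hexp : Tendsto (fun lam : ℝ => Real.exp (-lam)) (𝓝[>] 0) (𝓝[<] 1) := by
    refine tendsto_nhdsWithin_of_tendsto_nhds_of_eventually_within _ ?_ ?_
    · exact ((Real.continuous_exp.comp continuous_neg).tendsto' 0 1 (by simp)).mono_left
        nhdsWithin_le_nhds
    · filter_upwards [self_mem_nhdsWithin] with lam hlam
      simpa using hlam
  refine (((continuous_id.matrix_elem i j).tendsto _).comp
    ((tendsto_tsum_pow_smul_pow_sub_uniformMatrix hP hdet).comp hexp)).congr' ?_
  filter_upwards [self_mem_nhdsWithin] with lam hlam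
  have hx : |Real.exp (-lam)| < 1 := by
    rw [abs_of_pos (Real.exp_pos _), Real.exp_lt_one_iff]; simpa using hlam
  have hs := summable_pow_smul_pow_sub_uniformMatrix hP hx
  refine (Pi.hasSum.1 (Pi.hasSum.1 hs.hasSum i) j).tsum_eq.symm.trans (tsum_congr fun t => ?_)
  rw [Matrix.smul_apply, Matrix.sub_apply, smul_eq_mul, mul_comm, ← Real.exp_nat_mul]
  simp [uniformMatrix, mul_comm]

end Limit

theorem AddMonoid.add_nsmul_induction {G : Type*} [AddMonoid G] {p : G → Prop} {s : G}
    (h : ∀ x, p x → p (x + s)) (n : ℕ) {x : G} (hx : p x) : p (x + n • s) := by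
  induction n with
  | zero => simpa using hx
  | succ n ih => rw [succ_nsmul, ← add_assoc]; exact h _ ih

section Torus

variable (N : ℕ)

theorem Torus.eq_val_nsmul_add_val_nsmul [NeZero N] (d : Torus N) :
    d = d.1.val • ((1, 0) : Torus N) + d.2.val • ((0, 1) : Torus N) := by
  ext <;> simp

theorem sum_div_four_count_torusSteps [NeZero N] :
    ∑ d : Torus N, ((torusSteps N).count d : ℝ) / 4 = 1 := by
  simp only [torusSteps, List.count_cons, List.count_nil, beq_iff_eq, ← Finset.sum_div]
  push_cast
  simp only [Finset.sum_add_distrib, Finset.sum_ite_eq, Finset.mem_univ]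
  norm_num

theorem srwKernel_mem_doublyStochastic [NeZero N] :
    srwKernel N ∈ doublyStochastic ℝ (Torus N) := by
  refine mem_doublyStochastic_iff_sum.2 ⟨fun _ _ => by unfold srwKernel; positivity, fun i => ?_,
    fun j => ?_⟩
  · rw [← sum_div_four_count_torusSteps N]
    exact (Equiv.subRight i).sum_comp fun d => ((torusSteps N).count d : ℝ) / 4
  · rw [← sum_div_four_count_torusSteps N]
    exact (Equiv.subLeft j).sum_comp fun d => ((torusSteps N).count d : ℝ) / 4

variable {N}

theorem srwKernel_add_pos {s : Torus N} (hs : s ∈ torusSteps N) (x : Torus N) :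
    0 < srwKernel N x (x + s) := by
  have : 0 < (torusSteps N).count s := List.count_pos_iff.2 hs
  simp only [srwKernel, add_sub_cancel_left]
  positivity

theorem eq_of_srwKernel_mulVec_eq_self [NeZero N] {v : Torus N → ℝ}
    (hv : srwKernel N *ᵥ v = v) (i j : Torus N) : v i = v j := by
  obtain ⟨x₀, -, hmax⟩ := Finset.exists_max_image Finset.univ v Finset.univ_nonempty
  have hP := (mem_doublyStochastic_iff_mem_rowStochastic_and_mem_colStochastic.1
    (srwKernel_mem_doublyStochastic N)).1
  have hstep {s : Torus N} (hs : s ∈ torusSteps N) (x : Torus N) (hx : v x = v x₀) :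
      v (x + s) = v x₀ :=
    (apply_eq_of_mulVec_eq_self_of_forall_le hP hv
      (fun z => hx ▸ hmax z (Finset.mem_univ z)) (srwKernel_add_pos hs x)).trans hx
  have hall (y : Torus N) : v y = v x₀ := by
    have := AddMonoid.add_nsmul_induction (hstep (s := (0, 1)) (by simp [torusSteps]))
      (y - x₀).2.val <| AddMonoid.add_nsmul_induction (hstep (s := (1, 0)) (by simp [torusSteps]))
      (y - x₀).1.val (x := x₀) rfl
    rwa [add_assoc, ← Torus.eq_val_nsmul_add_val_nsmul, add_sub_cancel] at this
  rw [hall i, hall j]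

theorem count_torusSteps_zero (hN : 2 ≤ N) : (torusSteps N).count 0 = 0 := by
  have : Fact (1 < N) := ⟨hN⟩
  simp [torusSteps, Prod.ext_iff]

theorem lap_eq_smul_one_sub_srwKernel (hN : 2 ≤ N) : lap N = (-4 : ℝ) • (1 - srwKernel N) := by
  ext i j
  by_cases h : i = j
  · simp [lap, srwKernel, h, count_torusSteps_zero hN]
  · simp [lap, srwKernel, h, one_apply_ne h]
    ring

end Torus

theorem green_eq_fundamentalMatrix (N : ℕ) [NeZero N] (i j : Torus N) :
    green N i j = (fundamentalMatrix (srwKernel N) * (1 - uniformMatrix (Torus N))) i j := by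
  have hcard : (Fintype.card (Torus N) : ℝ)⁻¹ = 1 / (N ^ 2 : ℝ) := by
    simp [ZMod.card, sq]
  have hP := srwKernel_mem_doublyStochastic N
  have hlim := tendsto_tsum_sub_inv_card_mul_exp hP
    (isUnit_det_one_sub_add_uniformMatrix hP fun _ => eq_of_srwKernel_mulVec_eq_self) i j
  rw [hcard] at hlim
  exact hlim.limUnder_eq

/-- The restricted Laplacian `Δ_{0ᶜ0ᶜ}` (rows/columns away from the origin) is invertible, and
`−4 ((Δ_{0ᶜ0ᶜ})⁻¹)_{ij} = G_{ij} − G_{i0} − G_{0j} + G_{00}` for `i, j ≠ 0`. -/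
theorem stmt7 (N : ℕ) [NeZero N] (hN : 2 ≤ N) :
    let Δ0 : Matrix {v : Torus N // v ≠ 0} {v : Torus N // v ≠ 0} ℝ :=
      fun i j => lap N (i : Torus N) (j : Torus N)
    IsUnit Δ0.det ∧
      ∀ i j : {v : Torus N // v ≠ 0},
        -4 * (Δ0⁻¹ i j)
          = green N (i : Torus N) (j : Torus N) - green N (i : Torus N) 0 -
              green N 0 (j : Torus N) + green N 0 0 := by
  intro Δ0
  have hP := srwKernel_mem_doublyStochastic N
  have hdet := isUnit_det_one_sub_add_uniformMatrix hP fun _ => eq_of_srwKernel_mulVec_eq_self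
  set G := fundamentalMatrix (srwKernel N) * (1 - uniformMatrix (Torus N))
  have hlap : lap N = (-4 : ℝ) • (1 - srwKernel N) := lap_eq_smul_one_sub_srwKernel hN
  have hLG : lap N * G = (-4 : ℝ) • (1 - uniformMatrix (Torus N)) := by
    rw [hlap, Matrix.smul_mul, one_sub_mul_fundamentalMatrix_mul hP hdet]
  have hrow (i : Torus N) : ∑ k, lap N i k = 0 := by
    simp [hlap, ← Finset.mul_sum, one_apply, Finset.sum_sub_distrib,
      sum_row_of_mem_doublyStochastic hP]
  have hinv : Δ0 * ((-4 : ℝ)⁻¹ • G.groundAt 0) = 1 := by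
    rw [Matrix.mul_smul, show Δ0 = (lap N).submatrix (↑) (↑) from rfl,
      submatrix_mul_groundAt 0 hrow hLG, smul_smul]
    norm_num
  refine ⟨isUnit_det_of_right_inverse hinv, fun i j => ?_⟩
  simp only [inv_eq_right_inv hinv, green_eq_fundamentalMatrix, Matrix.smul_apply, groundAt,
    of_apply, smul_eq_mul]
  ring
end

section
/- Let H : Ω → ℝ on a finite (or countable) configuration space Ω with Gibbs measure P_β(x) = e^{−βH(x)}/Z_β, and suppose events A_k (k ∈ ℕ₀) and a family of maps F_γ indexed by contours γ ∈ Γ satisfy: A_k = ⊔_{γ∈Γ} A_{k,γ} (disjoint union), each F_γ : A_{k,γ} → A_{k−1} is injective, and H(x) − H(F_γ(x)) ≥ |γ| for x ∈ A_{k,γ}. Then P_β(A_k) ≤ P_β(A_{k−1}) ∑_{γ∈Γ} e^{−β|γ|}, and iterating, P_β(A_k) ≤ (∑_{γ∈Γ} e^{−β|γ|})^k provided A_0 = Ω. -/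
/-!
Each contour map `F_γ` moves `A_{k,γ}` injectively into `A_{k-1}` while lowering the energy by at
least `|γ|`, so the Gibbs weight of `x ∈ A_{k,γ}` is at most `e^{-β|γ|}` times that of `F_γ x`.
Summing over `A_{k,γ}` and then over `γ` (a union bound) gives
`Z P(A_k) ≤ (∑_γ e^{-β|γ|}) Z P(A_{k-1})`; iterating down to `P(A_0) = 1` gives the power bound.
-/

open Set Real
open scoped ENNReal

namespace ENNReal

variable {α β ι : Type*}

theorem tsum_subtype_le_mul_tsum_of_injOn {w : α → ℝ≥0∞} {v : β → ℝ≥0∞} {c : ℝ≥0∞}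
    {s : Set α} {t : Set β} {f : α → β} (hf : MapsTo f s t) (hinj : InjOn f s)
    (hle : ∀ x ∈ s, w x ≤ c * v (f x)) :
    ∑' x : s, w x ≤ c * ∑' y : t, v y :=
  calc ∑' x : s, w x ≤ ∑' x : s, c * v (f x) := ENNReal.tsum_le_tsum fun x => hle x x.2
    _ = c * ∑' y : f '' s, v y := by rw [ENNReal.tsum_mul_left, tsum_image v hinj]
    _ ≤ c * ∑' y : t, v y := by gcongr; exact tsum_mono_subtype v hf.image_subset

theorem tsum_iUnion_le_tsum_mul_tsum_of_injOn {w : α → ℝ≥0∞} {v : β → ℝ≥0∞} {c : ι → ℝ≥0∞}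
    {s : ι → Set α} {t : Set β} {f : ι → α → β} (hf : ∀ i, MapsTo (f i) (s i) t)
    (hinj : ∀ i, InjOn (f i) (s i)) (hle : ∀ i, ∀ x ∈ s i, w x ≤ c i * v (f i x)) :
    ∑' x : ⋃ i, s i, w x ≤ (∑' i, c i) * ∑' y : t, v y :=
  calc ∑' x : ⋃ i, s i, w x ≤ ∑' i, ∑' x : s i, w x := tsum_iUnion_le_tsum w s
    _ ≤ ∑' i, c i * ∑' y : t, v y := ENNReal.tsum_le_tsum fun i =>
        tsum_subtype_le_mul_tsum_of_injOn (hf i) (hinj i) (hle i)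
    _ = (∑' i, c i) * ∑' y : t, v y := ENNReal.tsum_mul_right

end ENNReal

theorem tsum_iUnion_le_tsum_mul_tsum_of_injOn {α β ι : Type*} {w : α → ℝ} {v : β → ℝ}
    {c : ι → ℝ} (hw : Summable w) (hw₀ : 0 ≤ w) (hv : Summable v) (hv₀ : 0 ≤ v)
    (hc : Summable c) (hc₀ : 0 ≤ c) {s : ι → Set α} {t : Set β} {f : ι → α → β}
    (hf : ∀ i, MapsTo (f i) (s i) t) (hinj : ∀ i, InjOn (f i) (s i))
    (hle : ∀ i, ∀ x ∈ s i, w x ≤ c i * v (f i x)) :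
    ∑' x : ⋃ i, s i, w x ≤ (∑' i, c i) * ∑' y : t, v y := by
  have h := ENNReal.tsum_iUnion_le_tsum_mul_tsum_of_injOn (w := fun x => .ofReal (w x))
    (v := fun y => .ofReal (v y)) (c := fun i => .ofReal (c i)) hf hinj fun i x hx => by
      rw [← ENNReal.ofReal_mul (hc₀ i)]
      exact ENNReal.ofReal_le_ofReal (hle i x hx)
  rw [← ENNReal.ofReal_tsum_of_nonneg (fun x : ⋃ i, s i => hw₀ x) (hw.subtype _),
    ← ENNReal.ofReal_tsum_of_nonneg hc₀ hc,
    ← ENNReal.ofReal_tsum_of_nonneg (fun y : t => hv₀ y) (hv.subtype _),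
    ← ENNReal.ofReal_mul (tsum_nonneg hc₀)] at h
  exact (ENNReal.ofReal_le_ofReal_iff
    (mul_nonneg (tsum_nonneg hc₀) (tsum_nonneg fun y : t => hv₀ y))).1 h

theorem Real.exp_neg_mul_le_exp_neg_mul_mul_of_le_sub {β a b ℓ : ℝ} (hβ : 0 ≤ β)
    (h : ℓ ≤ a - b) : exp (-β * a) ≤ exp (-β * ℓ) * exp (-β * b) := by
  rw [← exp_add]
  exact exp_le_exp.2 (by nlinarith)

theorem stmt13_general {Ω : Type*} {Γ : Type*}
    (H : Ω → ℝ) (β : ℝ) (hβ : 0 < β)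
    (hZ : Summable fun x : Ω => Real.exp (-β * H x))
    (len : Γ → ℕ)
    (hΓ : Summable fun γ : Γ => Real.exp (-β * (len γ : ℝ)))
    (A : ℕ → Set Ω) (Asub : ℕ → Γ → Set Ω) (F : Γ → Ω → Ω)
    (hpart : ∀ k, 1 ≤ k → A k = ⋃ γ : Γ, Asub k γ)
    (hmap : ∀ k, 1 ≤ k → ∀ γ : Γ, ∀ x ∈ Asub k γ, F γ x ∈ A (k - 1))
    (hinj : ∀ k, 1 ≤ k → ∀ γ : Γ, Set.InjOn (F γ) (Asub k γ))
    (hen : ∀ k, 1 ≤ k → ∀ γ : Γ, ∀ x ∈ Asub k γ, (len γ : ℝ) ≤ H x - H (F γ x))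
    (hA0 : A 0 = Set.univ) :
    let Z : ℝ := ∑' x : Ω, Real.exp (-β * H x)
    let P : Set Ω → ℝ := fun S => (∑' x : S, Real.exp (-β * H (x : Ω))) / Z
    (∀ k, 1 ≤ k →
        P (A k) ≤ P (A (k - 1)) * ∑' γ : Γ, Real.exp (-β * (len γ : ℝ))) ∧
    ∀ k, P (A k) ≤ (∑' γ : Γ, Real.exp (-β * (len γ : ℝ))) ^ k := by
  intro Z P
  set C := ∑' γ : Γ, exp (-β * (len γ : ℝ))
  have hC : 0 ≤ C := tsum_nonneg fun _ => (exp_pos _).le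
  have hZ₀ : 0 ≤ Z := tsum_nonneg fun _ => (exp_pos _).le
  have step (k : ℕ) (hk : 1 ≤ k) : P (A k) ≤ P (A (k - 1)) * C := by
    have hsum := tsum_iUnion_le_tsum_mul_tsum_of_injOn hZ (fun _ => (exp_pos _).le) hZ
      (fun _ => (exp_pos _).le) hΓ (fun _ => (exp_pos _).le) (hmap k hk) (hinj k hk)
      fun γ x hx => exp_neg_mul_le_exp_neg_mul_mul_of_le_sub hβ.le (hen k hk γ x hx)
    rw [← hpart k hk] at hsum
    simp only [P]
    rw [div_mul_eq_mul_div, mul_comm _ C]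
    gcongr
  have hP₀ : P (A 0) ≤ 1 := by
    simp only [P, hA0]
    rw [tsum_univ fun x => exp (-β * H x)]
    exact div_self_le_one Z
  refine ⟨step, fun k => ?_⟩
  calc P (A k) ≤ C ^ k * P (A 0) :=
        le_geom (u := fun j => P (A j)) hC k fun j _ => by simpa [mul_comm] using step (j + 1) (by omega)
    _ ≤ C ^ k := mul_le_of_le_one_right (pow_nonneg hC k) hP₀

/-- Abstract Peierls argument. On a countable configuration space with Gibbs weights
`e^{−βH(x)}` and finite partition function, if the events `A_k` (for `k ≥ 1`) decompose as
disjoint unions `A_k = ⊔_γ A_{k,γ}` over contours `γ`, and there are injective maps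
`F_γ : A_{k,γ} → A_{k−1}` with energy gain `H(x) − H(F_γ(x)) ≥ |γ|`, then
`P_β(A_k) ≤ P_β(A_{k−1}) ∑_γ e^{−β|γ|}`, and, if `A_0 = Ω`, iterating gives
`P_β(A_k) ≤ (∑_γ e^{−β|γ|})^k`. -/
theorem stmt13 {Ω : Type*} [Countable Ω] {Γ : Type*} [Countable Γ]
    (H : Ω → ℝ) (β : ℝ) (hβ : 0 < β)
    (hZ : Summable fun x : Ω => Real.exp (-β * H x))
    (len : Γ → ℕ)
    (hΓ : Summable fun γ : Γ => Real.exp (-β * (len γ : ℝ)))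
    (A : ℕ → Set Ω) (Asub : ℕ → Γ → Set Ω) (F : Γ → Ω → Ω)
    (hpart : ∀ k, 1 ≤ k → A k = ⋃ γ : Γ, Asub k γ)
    (hdisj : ∀ k, 1 ≤ k → ∀ γ γ' : Γ, γ ≠ γ' → Disjoint (Asub k γ) (Asub k γ'))
    (hmap : ∀ k, 1 ≤ k → ∀ γ : Γ, ∀ x ∈ Asub k γ, F γ x ∈ A (k - 1))
    (hinj : ∀ k, 1 ≤ k → ∀ γ : Γ, Set.InjOn (F γ) (Asub k γ))
    (hen : ∀ k, 1 ≤ k → ∀ γ : Γ, ∀ x ∈ Asub k γ, (len γ : ℝ) ≤ H x - H (F γ x))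
    (hA0 : A 0 = Set.univ) :
    let Z : ℝ := ∑' x : Ω, Real.exp (-β * H x)
    let P : Set Ω → ℝ := fun S => (∑' x : S, Real.exp (-β * H (x : Ω))) / Z
    (∀ k, 1 ≤ k →
        P (A k) ≤ P (A (k - 1)) * ∑' γ : Γ, Real.exp (-β * (len γ : ℝ))) ∧
    ∀ k, P (A k) ≤ (∑' γ : Γ, Real.exp (-β * (len γ : ℝ))) ^ k :=
  stmt13_general H β hβ hZ len hΓ A Asub F hpart hmap hinj hen hA0
end
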